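/- For every integer k ≥ 1, define u_k : ℝ² → ℝ by u_k(x₁, x₂) = (x₁ + x₂)^{2k} − (2 − (x₁ − x₂)²)^k. Then: (i) each u_k satisfies the wave equation ∂²u_k/∂x₁² − ∂²u_k/∂x₂² = 0 on ℝ²; (ii) u_k vanishes on the unit circle {x₁² + x₂² = 1}; and (iii) the family (u_k)_{k ≥ 1}, restricted to the closed unit disc, is linearly independent. Consequently, the Dirichlet problem for the operator ∂²/∂x₁² − ∂²/∂x₂² on the unit disc with zero boundary data has an infinite-dimensional space of smooth solutions, so the linearization of the 0-Laplacian problem around σ₀ = 1 with boundary condition f = x₁ on the unit disc, with Dirichlet data alone, is not injective. -/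

import Mathlib

/-- The family `u_k(x₁,x₂) = (x₁+x₂)^{2k} − (2 − (x₁−x₂)²)^k`. -/
noncomputable def waveFamily (k : ℕ) (p : ℝ × ℝ) : ℝ :=
  (p.1 + p.2) ^ (2 * k) - (2 - (p.1 - p.2) ^ 2) ^ k

noncomputable def Cfun (k : ℕ) (x : ℝ) : ℝ := (2*k : ℝ) * x ^ (2*k - 1)
noncomputable def Dfun (k : ℕ) (x : ℝ) : ℝ := (k : ℝ) * (2 - x^2)^(k-1) * (-(2*x))
noncomputable def Cd (k : ℕ) (x : ℝ) : ℝ := (2*k : ℝ) * ((2*k-1 : ℕ) * x^(2*k-1-1))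
noncomputable def Dd (k : ℕ) (x : ℝ) : ℝ :=
  (k:ℝ) * (((k-1:ℕ):ℝ) * (2-x^2)^(k-1-1) * (-(2*x))) * (-(2*x)) + ((k:ℝ) * (2-x^2)^(k-1)) * (-2)

lemma hasDerivAt_A (k : ℕ) (x : ℝ) : HasDerivAt (fun x:ℝ => x ^ (2*k)) (Cfun k x) x := by
  simpa [Cfun] using hasDerivAt_pow (2*k) x

lemma hasDerivAt_g (x : ℝ) : HasDerivAt (fun x:ℝ => 2 - x^2) (-(2*x)) x := by
  simpa using HasDerivAt.const_sub 2 (hasDerivAt_pow 2 x)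

lemma hasDerivAt_B (k : ℕ) (x : ℝ) : HasDerivAt (fun x:ℝ => (2 - x^2)^k) (Dfun k x) x := by
  simpa [Dfun, Function.comp_def, Pi.pow_def] using (hasDerivAt_g x).pow k

lemma hasDerivAt_C (k : ℕ) (x : ℝ) : HasDerivAt (Cfun k) (Cd k x) x := by
  exact (hasDerivAt_pow (2*k-1) x).const_mul (2*k:ℝ)

lemma hasDerivAt_D (k : ℕ) (x : ℝ) : HasDerivAt (Dfun k) (Dd k x) x := by
  have hf : HasDerivAt (fun x:ℝ => (k:ℝ) * (2-x^2)^(k-1))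
      ((k:ℝ) * (((k-1:ℕ):ℝ) * (2-x^2)^(k-1-1) * (-(2*x)))) x := by
    simpa using ((hasDerivAt_g x).pow (k-1)).const_mul (k:ℝ)
  have hg : HasDerivAt (fun x:ℝ => -(2*x)) (-2) x := by
    simpa [Function.comp_def, Pi.neg_def] using ((hasDerivAt_id x).const_mul (2:ℝ)).neg
  exact hf.mul hg

lemma wave_core (k : ℕ) (a b : ℝ) :
    deriv (deriv (fun s : ℝ => waveFamily k (s, b))) a
      = deriv (deriv (fun t : ℝ => waveFamily k (a, t))) b := by
  have hs1 : ∀ s : ℝ, HasDerivAt (fun s : ℝ => waveFamily k (s, b))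
      (Cfun k (s+b) - Dfun k (s-b)) s := by
    intro s
    have h1 : HasDerivAt (fun s:ℝ => (s+b)^(2*k)) (Cfun k (s+b)) s := by
      simpa [Function.comp_def] using (hasDerivAt_A k (s+b)).comp s ((hasDerivAt_id s).add_const b)
    have h2 : HasDerivAt (fun s:ℝ => (2-(s-b)^2)^k) (Dfun k (s-b)) s := by
      simpa [Function.comp_def] using (hasDerivAt_B k (s-b)).comp s ((hasDerivAt_id s).sub_const b)
    simpa [waveFamily, Pi.sub_def] using h1.sub h2
  have ht1 : ∀ t : ℝ, HasDerivAt (fun t : ℝ => waveFamily k (a, t))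
      (Cfun k (a+t) + Dfun k (a-t)) t := by
    intro t
    have h1 : HasDerivAt (fun t:ℝ => (a+t)^(2*k)) (Cfun k (a+t)) t := by
      simpa [Function.comp_def] using (hasDerivAt_A k (a+t)).comp t ((hasDerivAt_id t).const_add a)
    have h2 : HasDerivAt (fun t:ℝ => (2-(a-t)^2)^k) (-(Dfun k (a-t))) t := by
      have := (hasDerivAt_B k (a-t)).comp t (HasDerivAt.const_sub a (hasDerivAt_id t))
      simpa [Function.comp_def] using this
    have := h1.sub h2
    simpa [waveFamily, sub_neg_eq_add, Pi.sub_def] using this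
  have e1 : deriv (fun s : ℝ => waveFamily k (s, b))
      = fun s => Cfun k (s+b) - Dfun k (s-b) := funext fun s => (hs1 s).deriv
  have e2 : deriv (fun t : ℝ => waveFamily k (a, t))
      = fun t => Cfun k (a+t) + Dfun k (a-t) := funext fun t => (ht1 t).deriv
  have hs2 : HasDerivAt (fun s => Cfun k (s+b) - Dfun k (s-b)) (Cd k (a+b) - Dd k (a-b)) a := by
    have h1 : HasDerivAt (fun s:ℝ => Cfun k (s+b)) (Cd k (a+b)) a := by
      simpa [Function.comp_def] using (hasDerivAt_C k (a+b)).comp a ((hasDerivAt_id a).add_const b)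
    have h2 : HasDerivAt (fun s:ℝ => Dfun k (s-b)) (Dd k (a-b)) a := by
      simpa [Function.comp_def] using (hasDerivAt_D k (a-b)).comp a ((hasDerivAt_id a).sub_const b)
    exact h1.sub h2
  have ht2 : HasDerivAt (fun t => Cfun k (a+t) + Dfun k (a-t)) (Cd k (a+b) - Dd k (a-b)) b := by
    have h1 : HasDerivAt (fun t:ℝ => Cfun k (a+t)) (Cd k (a+b)) b := by
      simpa [Function.comp_def] using (hasDerivAt_C k (a+b)).comp b ((hasDerivAt_id b).const_add a)
    have h2 : HasDerivAt (fun t:ℝ => Dfun k (a-t)) (-(Dd k (a-b))) b := by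
      simpa [Function.comp_def] using (hasDerivAt_D k (a-b)).comp b (HasDerivAt.const_sub a (hasDerivAt_id b))
    simpa [sub_eq_add_neg, Pi.add_def] using h1.add h2
  rw [e1, e2, hs2.deriv, ht2.deriv]

lemma boundary0 (k : ℕ) (p : ℝ × ℝ) (h : p.1 ^ 2 + p.2 ^ 2 = 1) : waveFamily k p = 0 := by
  unfold waveFamily
  rw [pow_mul]
  have hb : (p.1 + p.2)^2 = 2 - (p.1 - p.2)^2 := by nlinarith
  rw [hb, sub_self]

lemma eval_diag (k : ℕ) (y : ℝ) (hy : 0 ≤ y) :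
    waveFamily (k+1) (Real.sqrt y / 2, Real.sqrt y / 2) = y ^ (k+1) - 2 ^ (k+1) := by
  unfold waveFamily
  have ht : (Real.sqrt y / 2 + Real.sqrt y / 2) ^ 2 = y := by
    have := Real.sq_sqrt hy
    nlinarith [Real.sq_sqrt hy]
  rw [pow_mul, ht]
  norm_num

lemma linIndep0 : LinearIndependent ℝ
    (fun (k : ℕ) (p : {p : ℝ × ℝ // p.1 ^ 2 + p.2 ^ 2 ≤ 1}) => waveFamily (k + 1) p.val) := by
  rw [linearIndependent_iff']
  intro s g hsum i hi
  have hpt : ∀ y : ℝ, y ∈ Set.Icc (0:ℝ) 1 →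
      ∑ j ∈ s, g j * (y ^ (j+1) - 2 ^ (j+1)) = 0 := by
    intro y hy
    have hmem : (Real.sqrt y / 2) ^ 2 + (Real.sqrt y / 2) ^ 2 ≤ 1 := by
      have h1 : (Real.sqrt y) ^ 2 = y := Real.sq_sqrt hy.1
      nlinarith [hy.2]
    have := congrFun hsum ⟨(Real.sqrt y / 2, Real.sqrt y / 2), hmem⟩
    simp only [Finset.sum_apply, Pi.smul_apply, smul_eq_mul, Pi.zero_apply] at this
    calc ∑ j ∈ s, g j * (y ^ (j+1) - 2 ^ (j+1))
        = ∑ j ∈ s, g j * waveFamily (j+1) (Real.sqrt y / 2, Real.sqrt y / 2) := by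
          refine Finset.sum_congr rfl fun j _ => ?_
          rw [eval_diag j y hy.1]
      _ = 0 := this
  set P : Polynomial ℝ := ∑ j ∈ s, Polynomial.C (g j) *
      (Polynomial.X ^ (j+1) - Polynomial.C ((2:ℝ) ^ (j+1))) with hPdef
  have hPeval : ∀ y ∈ Set.Icc (0:ℝ) 1, P.eval y = 0 := by
    intro y hy
    have := hpt y hy
    simpa [hPdef, Polynomial.eval_finset_sum] using this
  have hP0 : P = 0 := by
    apply Polynomial.eq_zero_of_infinite_isRoot
    exact (Set.Icc_infinite (show (0:ℝ) < 1 by norm_num)).mono (fun y hy => hPeval y hy)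
  have hc : P.coeff (i+1) = g i := by
    rw [hPdef]
    rw [Polynomial.finset_sum_coeff]
    simp only [Polynomial.coeff_C_mul, Polynomial.coeff_sub, Polynomial.coeff_X_pow,
      Polynomial.coeff_C, Nat.succ_ne_zero, if_false, add_left_inj]
    rw [Finset.sum_eq_single i]
    · simp
    · intro j hj hne; simp [hne, Ne.symm hne]
    · intro h; exact absurd hi h
  rw [hP0] at hc
  simpa using hc.symm


lemma contDiff_waveFamily (k : ℕ) : ContDiff ℝ (⊤ : ℕ∞) (waveFamily k) := by
  unfold waveFamily
  exact ((contDiff_fst.add contDiff_snd).pow _).sub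
    ((contDiff_const.sub ((contDiff_fst.sub contDiff_snd).pow 2)).pow k)

/-- for every `k ≥ 1`, `u_k(x₁,x₂) = (x₁+x₂)^{2k} − (2−(x₁−x₂)²)^k`
satisfies the wave equation `∂²u/∂x₁² − ∂²u/∂x₂² = 0` on `ℝ²`, vanishes on the unit
circle, and the family `(u_k)_{k≥1}` restricted to the closed unit disc is linearly
independent; consequently, the Dirichlet problem for `∂²/∂x₁² − ∂²/∂x₂²` on the unit disc
with zero boundary data has an infinite-dimensional space of smooth solutions (so the
linearization of the 0-Laplacian around `σ₀ = 1` with Dirichlet data alone is not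
injective). -/
theorem wave_equation_dirichlet_nonuniqueness_on_disc :
    (∀ k : ℕ, 1 ≤ k → ∀ p : ℝ × ℝ,
      deriv (deriv (fun s : ℝ => waveFamily k (s, p.2))) p.1
        - deriv (deriv (fun t : ℝ => waveFamily k (p.1, t))) p.2 = 0) ∧
    (∀ k : ℕ, 1 ≤ k → ∀ p : ℝ × ℝ, p.1 ^ 2 + p.2 ^ 2 = 1 → waveFamily k p = 0) ∧
    LinearIndependent ℝ
      (fun (k : ℕ) (p : {p : ℝ × ℝ // p.1 ^ 2 + p.2 ^ 2 ≤ 1}) => waveFamily (k + 1) p.val) ∧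
    (∃ v : ℕ → ℝ × ℝ → ℝ,
      (∀ j, ContDiff ℝ (⊤ : ℕ∞) (v j)) ∧
      (∀ j, ∀ p : ℝ × ℝ, p.1 ^ 2 + p.2 ^ 2 < 1 →
        deriv (deriv (fun s : ℝ => v j (s, p.2))) p.1
          - deriv (deriv (fun t : ℝ => v j (p.1, t))) p.2 = 0) ∧
      (∀ j, ∀ p : ℝ × ℝ, p.1 ^ 2 + p.2 ^ 2 = 1 → v j p = 0) ∧
      LinearIndependent ℝ
        (fun (j : ℕ) (p : {p : ℝ × ℝ // p.1 ^ 2 + p.2 ^ 2 ≤ 1}) => v j p.val)) := by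
  constructor
  · intro k _ p
    rw [wave_core k p.1 p.2, sub_self]
  refine ⟨fun k _ p h => boundary0 k p h, linIndep0, ?_⟩
  refine ⟨fun j => waveFamily (j+1), fun j => contDiff_waveFamily (j+1), ?_, ?_, linIndep0⟩
  · intro j p _
    rw [wave_core (j+1) p.1 p.2, sub_self]
  · intro j p h
    exact boundary0 (j+1) p h
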